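/- If the MCR instance is feasible (some s–t path p satisfies ω_k(p) ≤ W_k for all k), then the greedy path p_A (shortest path under the auxiliary weight) satisfies ω_k(p_A) ≤ K·W_k for all k = 1,...,K. -/
import Mathlib


/-- The `k`-th weight of a path (a list of edges): sum of edge weights. -/
noncomputable def pathWeight {E : Type*} (w : E → ℝ) (p : List E) : ℝ :=
  (p.map w).sum

/-- The auxiliary weight of an edge: `max_k ω_k(e) / W_k`. -/
noncomputable def auxWeight {E : Type*} {K : ℕ} (hK : 0 < K)
    (ω : E → Fin K → ℝ) (W : Fin K → ℝ) (e : E) : ℝ :=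
  Finset.univ.sup' (Finset.univ_nonempty_iff.mpr (Fin.pos_iff_nonempty.mp hK))
    (fun k => ω e k / W k)

/-- The (max-normalized) length of a path: `max_k ω_k(p) / W_k`. -/
noncomputable def pathLen {E : Type*} {K : ℕ} (hK : 0 < K)
    (ω : E → Fin K → ℝ) (W : Fin K → ℝ) (p : List E) : ℝ :=
  Finset.univ.sup' (Finset.univ_nonempty_iff.mpr (Fin.pos_iff_nonempty.mp hK))
    (fun k => pathWeight (fun e => ω e k) p / W k)

private lemma list_sum_div {E : Type*} (f : E → ℝ) (c : ℝ) (p : List E) :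
    (p.map (fun e => f e / c)).sum = (p.map f).sum / c := by
  induction p with
  | nil => simp
  | cons a l ih => simp [ih, add_div]

private lemma list_sum_map_sum {E : Type*} {K : ℕ} (f : E → Fin K → ℝ) (p : List E) :
    (p.map (fun e => ∑ k, f e k)).sum = ∑ k, (p.map (fun e => f e k)).sum := by
  induction p with
  | nil => simp
  | cons a l ih => simp [ih, Finset.sum_add_distrib]

/-- if the MCR instance is feasible, the greedy path `p_A` satisfies
`ω_k(p_A) ≤ K·W_k` for all `k`. -/
theorem greedy_feasible_K_bound {E : Type*} {K : ℕ} (hK : 0 < K)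
    (ω : E → Fin K → ℝ) (W : Fin K → ℝ)
    (hω : ∀ e k, 0 ≤ ω e k) (hW : ∀ k, 0 < W k)
    (P : Set (List E))  -- the set of s–t paths in the graph
    (hfeas : ∃ p ∈ P, ∀ k, pathWeight (fun e => ω e k) p ≤ W k)
    (pA : List E) (hpA : pA ∈ P)
    (hshort : ∀ p ∈ P, (pA.map (auxWeight hK ω W)).sum ≤ (p.map (auxWeight hK ω W)).sum) :
    ∀ k, pathWeight (fun e => ω e k) pA ≤ K * W k := by
  intro k
  obtain ⟨p, hp, hpf⟩ := hfeas
  -- Step 1: ω_k(pA)/W_k ≤ aux-length of pA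
  have h1 : (pA.map (fun e => ω e k / W k)).sum ≤ (pA.map (auxWeight hK ω W)).sum := by
    apply List.sum_le_sum
    intro e he
    exact Finset.le_sup' (fun j => ω e j / W j) (Finset.mem_univ k)
  -- Step 2: aux-length of p ≤ ∑_j ω_j(p)/W_j ≤ K
  have h2 : (p.map (auxWeight hK ω W)).sum ≤ (p.map (fun e => ∑ j, ω e j / W j)).sum := by
    apply List.sum_le_sum
    intro e he
    apply Finset.sup'_le
    intro j _
    exact Finset.single_le_sum (f := fun j => ω e j / W j)
      (fun i _ => div_nonneg (hω e i) (hW i).le) (Finset.mem_univ j)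
  have h3 : (p.map (fun e => ∑ j, ω e j / W j)).sum ≤ (K : ℝ) := by
    rw [list_sum_map_sum]
    calc ∑ j, (p.map (fun e => ω e j / W j)).sum ≤ ∑ j : Fin K, (1 : ℝ) := by
          apply Finset.sum_le_sum
          intro j _
          rw [list_sum_div, div_le_one (hW j)]
          exact hpf j
      _ = (K : ℝ) := by simp
  have hsum : (pA.map (fun e => ω e k / W k)).sum ≤ (K : ℝ) :=
    h1.trans ((hshort p hp).trans (h2.trans h3))
  have : (pA.map (fun e => ω e k)).sum / W k ≤ (K : ℝ) := by
    rwa [list_sum_div] at hsum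
  rw [div_le_iff₀ (hW k)] at this
  simpa [pathWeight] using this
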